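/- For every integer n ≥ 1, the set of nonzero solutions y ∈ B_n of the quadratic equation y·y = 2y is exactly {e + f, e, f, u, v, σ(u), σ(v)}; that is, the Virasoro vectors of the Griess algebra of A(1/2, c¹_n) are precisely the conformal vector ω = e + f together with e, f, u, v, σ(u), σ(v). -/
import Mathlib


open Matrix

/-- The basis vector `e` (the Ising vector) of the Griess algebra `B_n` of `A(1/2, c¹_n)`. -/
noncomputable def Be : Fin 3 → ℂ := ![1, 0, 0]

/-- The basis vector `f` of the Griess algebra `B_n`. -/
noncomputable def Bf : Fin 3 → ℂ := ![0, 1, 0]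

/-- The basis vector `x` of the Griess algebra `B_n`. -/
noncomputable def Bx : Fin 3 → ℂ := ![0, 0, 1]

/-- The commutative product of the Griess algebra `B_n` of `A(1/2, c¹_n)`, written in
coordinates with respect to the basis `{e, f, x}`: it is determined by
`e·e = 2e`, `f·f = 2f`, `e·f = 0`, `e·x = (1/2)x`, `f·x = (3/2)x`,
`x·x = 2n(n+6)e + 2(n+2)(n+4)f`. -/
noncomputable def Bmul (n : ℕ) (a b : Fin 3 → ℂ) : Fin 3 → ℂ :=
  ![2 * a 0 * b 0 + 2 * (n : ℂ) * ((n : ℂ) + 6) * a 2 * b 2,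
    2 * a 1 * b 1 + 2 * ((n : ℂ) + 2) * ((n : ℂ) + 4) * a 2 * b 2,
    (1 / 2) * (a 0 * b 2 + a 2 * b 0) + (3 / 2) * (a 1 * b 2 + a 2 * b 1)]

/-- The invariant symmetric bilinear form of the Griess algebra `B_n`, determined by
`(e|e) = 1/4`, `(f|f) = (3/4)(1 − 8/((n+2)(n+4)))`, `(x|x) = n(n+6)`,
`(e|f) = (e|x) = (f|x) = 0`. -/
noncomputable def Bform (n : ℕ) (a b : Fin 3 → ℂ) : ℂ :=
  (1 / 4) * a 0 * b 0 + (3 / 4) * (1 - 8 / (((n : ℂ) + 2) * ((n : ℂ) + 4))) * a 1 * b 1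
    + (n : ℂ) * ((n : ℂ) + 6) * a 2 * b 2

/-- The Virasoro vector `u = (1/(2(n+3)))(n e + (n+4) f + x)` of `B_n`. -/
noncomputable def Bu (n : ℕ) : Fin 3 → ℂ :=
  (1 / (2 * ((n : ℂ) + 3))) • ((n : ℂ) • Be + ((n : ℂ) + 4) • Bf + Bx)

/-- The Virasoro vector `v = e + f − u` of `B_n`. -/
noncomputable def Bv (n : ℕ) : Fin 3 → ℂ := Be + Bf - Bu n

/-- The involution `σ` of `B_n`: `σ(e) = e`, `σ(f) = f`, `σ(x) = −x`. -/
noncomputable def Bsigma : (Fin 3 → ℂ) → (Fin 3 → ℂ) := fun a => ![a 0, a 1, -a 2]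

lemma vec_ext {y w : Fin 3 → ℂ} (h0 : y 0 = w 0) (h1 : y 1 = w 1) (h2 : y 2 = w 2) : y = w := by
  funext i; fin_cases i <;> assumption

lemma Bs0 (a : Fin 3 → ℂ) : Bsigma a 0 = a 0 := rfl
lemma Bs1 (a : Fin 3 → ℂ) : Bsigma a 1 = a 1 := rfl
lemma Bs2 (a : Fin 3 → ℂ) : Bsigma a 2 = -a 2 := rfl

lemma Bmul0 (n : ℕ) (a b : Fin 3 → ℂ) :
    Bmul n a b 0 = 2 * a 0 * b 0 + 2 * (n : ℂ) * ((n : ℂ) + 6) * a 2 * b 2 := rfl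
lemma Bmul1 (n : ℕ) (a b : Fin 3 → ℂ) :
    Bmul n a b 1 = 2 * a 1 * b 1 + 2 * ((n : ℂ) + 2) * ((n : ℂ) + 4) * a 2 * b 2 := rfl
lemma Bmul2 (n : ℕ) (a b : Fin 3 → ℂ) :
    Bmul n a b 2 = (1 / 2) * (a 0 * b 2 + a 2 * b 0) + (3 / 2) * (a 1 * b 2 + a 2 * b 1) := rfl

lemma Bu0 (n : ℕ) : Bu n 0 = (1 / (2 * ((n : ℂ) + 3))) * (n : ℂ) := by
  simp [Bu, Be, Bf, Bx]
lemma Bu1 (n : ℕ) : Bu n 1 = (1 / (2 * ((n : ℂ) + 3))) * ((n : ℂ) + 4) := by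
  simp [Bu, Be, Bf, Bx]
lemma Bu2 (n : ℕ) : Bu n 2 = 1 / (2 * ((n : ℂ) + 3)) := by
  simp [Bu, Be, Bf, Bx]
lemma Bv0 (n : ℕ) : Bv n 0 = 1 - (1 / (2 * ((n : ℂ) + 3))) * (n : ℂ) := by
  simp [Bv, Be, Bf, Bu0]
lemma Bv1 (n : ℕ) : Bv n 1 = 1 - (1 / (2 * ((n : ℂ) + 3))) * ((n : ℂ) + 4) := by
  simp [Bv, Be, Bf, Bu1]
lemma Bv2 (n : ℕ) : Bv n 2 = -(1 / (2 * ((n : ℂ) + 3))) := by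
  simp [Bv, Be, Bf, Bu2]

set_option maxHeartbeats 1000000 in
theorem stmt_9 (n : ℕ) (hn : 1 ≤ n) :
    {y : Fin 3 → ℂ | y ≠ 0 ∧ Bmul n y y = (2 : ℂ) • y}
      = {Be + Bf, Be, Bf, Bu n, Bv n, Bsigma (Bu n), Bsigma (Bv n)} := by
  have hN : (n : ℂ) ≠ 0 := Nat.cast_ne_zero.mpr (by omega)
  have h2 : (n : ℂ) + 2 ≠ 0 := by
    have := Nat.cast_ne_zero (R := ℂ) (n := n + 2) |>.mpr (by omega); push_cast at this; exact this
  have h3 : (n : ℂ) + 3 ≠ 0 := by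
    have := Nat.cast_ne_zero (R := ℂ) (n := n + 3) |>.mpr (by omega); push_cast at this; exact this
  have h4 : (n : ℂ) + 4 ≠ 0 := by
    have := Nat.cast_ne_zero (R := ℂ) (n := n + 4) |>.mpr (by omega); push_cast at this; exact this
  have h6 : (n : ℂ) + 6 ≠ 0 := by
    have := Nat.cast_ne_zero (R := ℂ) (n := n + 6) |>.mpr (by omega); push_cast at this; exact this
  have h2M : (2 : ℂ) * ((n : ℂ) + 3) ≠ 0 := mul_ne_zero two_ne_zero h3
  -- multiplied-form component values
  have hu0 : 2 * ((n : ℂ) + 3) * Bu n 0 = (n : ℂ) := by rw [Bu0]; field_simp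
  have hu1 : 2 * ((n : ℂ) + 3) * Bu n 1 = (n : ℂ) + 4 := by rw [Bu1]; field_simp
  have hu2 : 2 * ((n : ℂ) + 3) * Bu n 2 = 1 := by rw [Bu2]; field_simp
  have hv0 : 2 * ((n : ℂ) + 3) * Bv n 0 = (n : ℂ) + 6 := by rw [Bv0]; field_simp; ring
  have hv1 : 2 * ((n : ℂ) + 3) * Bv n 1 = (n : ℂ) + 2 := by rw [Bv1]; field_simp; ring
  have hv2 : 2 * ((n : ℂ) + 3) * Bv n 2 = -1 := by rw [Bv2]; field_simp
  ext y
  simp only [Set.mem_setOf_eq, Set.mem_insert_iff, Set.mem_singleton_iff]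
  constructor
  · rintro ⟨hy0, hmul⟩
    have e0 := congrFun hmul 0
    have e1 := congrFun hmul 1
    have e2 := congrFun hmul 2
    rw [Bmul0] at e0
    rw [Bmul1] at e1
    rw [Bmul2] at e2
    simp only [Pi.smul_apply, smul_eq_mul] at e0 e1 e2
    by_cases hc : y 2 = 0
    · have g0 : y 0 * (y 0 - 1) = 0 := by
        linear_combination (1/2) * e0 - (n : ℂ) * ((n : ℂ) + 6) * y 2 * hc
      have g1 : y 1 * (y 1 - 1) = 0 := by
        linear_combination (1/2) * e1 - ((n : ℂ) + 2) * ((n : ℂ) + 4) * y 2 * hc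
      rcases mul_eq_zero.mp g0 with ga | ga <;> rcases mul_eq_zero.mp g1 with gb | gb
      · exact absurd (vec_ext (by simpa using ga) (by simpa using gb) (by simpa using hc)) hy0
      · right; right; left
        exact vec_ext (by simp [Bf, ga]) (by simp [Bf]; linear_combination gb) (by simp [Bf, hc])
      · right; left
        exact vec_ext (by simp [Be]; linear_combination ga) (by simp [Be, gb]) (by simp [Be, hc])
      · left
        refine vec_ext ?_ ?_ ?_
        · simp [Be, Bf]; linear_combination ga
        · simp [Be, Bf]; linear_combination gb
        · simp [Be, Bf, hc]
    · have g2 : y 2 * (y 0 + 3 * y 1 - 2) = 0 := by linear_combination e2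
      have ha : y 0 = 2 - 3 * y 1 := by
        have := (mul_eq_zero.mp g2).resolve_left hc
        linear_combination this
      have hprod : (2 * ((n : ℂ) + 3) * y 1 - ((n : ℂ) + 2))
          * (2 * ((n : ℂ) + 3) * y 1 - ((n : ℂ) + 4)) = 0 := by
        linear_combination (((n : ℂ) + 2) * ((n : ℂ) + 4) / 4) * e0
          - ((n : ℂ) * ((n : ℂ) + 6) / 4) * e1
          - (((n : ℂ) + 2) * ((n : ℂ) + 4) / 2) * (y 0 + 1 - 3 * y 1) * ha
      rcases mul_eq_zero.mp hprod with hb | hb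
      · -- y 1 = (n+2)/(2(n+3)) : v or sigma v
        have hcc : ((n : ℂ) + 2) * ((n : ℂ) + 4)
            * ((2 * ((n : ℂ) + 3) * y 2 - 1) * (2 * ((n : ℂ) + 3) * y 2 + 1)) = 0 := by
          linear_combination 2 * ((n : ℂ) + 3) ^ 2 * e1
            - (2 * ((n : ℂ) + 3) * y 1 - ((n : ℂ) + 4)) * hb
        have hcf := (mul_eq_zero.mp hcc).resolve_left (mul_ne_zero h2 h4)
        rcases mul_eq_zero.mp hcf with hcv | hcv
        · -- c = +1/(2M) : sigma v
          right; right; right; right; right; right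
          refine vec_ext (mul_left_cancel₀ h2M ?_) (mul_left_cancel₀ h2M ?_)
            (mul_left_cancel₀ h2M ?_)
          · rw [Bs0, hv0]; linear_combination 2 * ((n : ℂ) + 3) * ha - 3 * hb
          · rw [Bs1, hv1]; linear_combination hb
          · rw [Bs2]; linear_combination hcv + hv2
        · -- c = -1/(2M) : v
          right; right; right; right; left
          refine vec_ext (mul_left_cancel₀ h2M ?_) (mul_left_cancel₀ h2M ?_)
            (mul_left_cancel₀ h2M ?_)
          · rw [hv0]; linear_combination 2 * ((n : ℂ) + 3) * ha - 3 * hb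
          · rw [hv1]; linear_combination hb
          · rw [hv2]; linear_combination hcv
      · -- y 1 = (n+4)/(2(n+3)) : u or sigma u
        have hcc : ((n : ℂ) + 2) * ((n : ℂ) + 4)
            * ((2 * ((n : ℂ) + 3) * y 2 - 1) * (2 * ((n : ℂ) + 3) * y 2 + 1)) = 0 := by
          linear_combination 2 * ((n : ℂ) + 3) ^ 2 * e1
            - (2 * ((n : ℂ) + 3) * y 1 - ((n : ℂ) + 2)) * hb
        have hcf := (mul_eq_zero.mp hcc).resolve_left (mul_ne_zero h2 h4)
        rcases mul_eq_zero.mp hcf with hcv | hcv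
        · -- c = +1/(2M) : u
          right; right; right; left
          refine vec_ext (mul_left_cancel₀ h2M ?_) (mul_left_cancel₀ h2M ?_)
            (mul_left_cancel₀ h2M ?_)
          · rw [hu0]; linear_combination 2 * ((n : ℂ) + 3) * ha - 3 * hb
          · rw [hu1]; linear_combination hb
          · rw [hu2]; linear_combination hcv
        · -- c = -1/(2M) : sigma u
          right; right; right; right; right; left
          refine vec_ext (mul_left_cancel₀ h2M ?_) (mul_left_cancel₀ h2M ?_)
            (mul_left_cancel₀ h2M ?_)
          · rw [Bs0, hu0]; linear_combination 2 * ((n : ℂ) + 3) * ha - 3 * hb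
          · rw [Bs1, hu1]; linear_combination hb
          · rw [Bs2]; linear_combination hcv + hu2
  · rintro (rfl | rfl | rfl | rfl | rfl | rfl | rfl)
    · constructor
      · intro h; have := congrFun h 0; simp [Be, Bf] at this
      · refine vec_ext ?_ ?_ ?_ <;>
          simp [Bmul0, Bmul1, Bmul2, Be, Bf] <;> norm_num
    · constructor
      · intro h; have := congrFun h 0; simp [Be] at this
      · refine vec_ext ?_ ?_ ?_ <;> simp [Bmul0, Bmul1, Bmul2, Be] <;> norm_num
    · constructor
      · intro h; have := congrFun h 1; simp [Bf] at this
      · refine vec_ext ?_ ?_ ?_ <;> simp [Bmul0, Bmul1, Bmul2, Bf] <;> norm_num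
    · constructor
      · intro h; have := congrFun h 2
        rw [Bu2, Pi.zero_apply] at this
        exact one_div_ne_zero h2M this
      · refine vec_ext ?_ ?_ ?_ <;>
          simp only [Bmul0, Bmul1, Bmul2, Bu0, Bu1, Bu2, Pi.smul_apply, smul_eq_mul] <;>
          field_simp <;> ring
    · constructor
      · intro h; have := congrFun h 2
        rw [Bv2, Pi.zero_apply] at this
        exact one_div_ne_zero h2M (neg_eq_zero.mp this)
      · refine vec_ext ?_ ?_ ?_ <;>
          simp only [Bmul0, Bmul1, Bmul2, Bv0, Bv1, Bv2, Pi.smul_apply, smul_eq_mul] <;>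
          field_simp <;> ring
    · constructor
      · intro h; have := congrFun h 2
        rw [Bs2, Bu2, Pi.zero_apply] at this
        exact one_div_ne_zero h2M (neg_eq_zero.mp this)
      · refine vec_ext ?_ ?_ ?_ <;>
          simp only [Bmul0, Bmul1, Bmul2, Bs0, Bs1, Bs2, Bu0, Bu1, Bu2,
            Pi.smul_apply, smul_eq_mul] <;>
          field_simp <;> ring
    · constructor
      · intro h; have := congrFun h 2
        rw [Bs2, Bv2, Pi.zero_apply] at this
        simp only [neg_neg] at this
        exact one_div_ne_zero h2M this
      · refine vec_ext ?_ ?_ ?_ <;>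
          simp only [Bmul0, Bmul1, Bmul2, Bs0, Bs1, Bs2, Bv0, Bv1, Bv2,
            Pi.smul_apply, smul_eq_mul] <;>
          field_simp <;> ring
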